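/- Let 1<p<∞, a,b ∈ L^∞(𝕋), f ∈ H^p(𝕋), and n ∈ ℕ. If the equation (T(t^{-n}a) + H(t^n b))ψ = f has no solution ψ in the image of the operator T(t^n): H^p(𝕋) → H^p(𝕋), then the equation (T(a)+H(b))φ = f is not solvable. -/

import Mathlib

open MeasureTheory Complex Real BigOperators
open scoped ENNReal

noncomputable section

instance fact2pi : Fact (0 < 2 * π) := ⟨by positivity⟩

/-- The unit circle, modelled additively as `ℝ / 2πℤ`. -/
abbrev UC : Type := AddCircle (2 * π)

/-- Normalized arc-length (Haar) measure on the circle. -/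
abbrev volUC : Measure UC := volume

/-- The Lebesgue space `L^p(𝕋)`. -/
abbrev LpC (p : ℝ≥0∞) : Type := Lp ℂ p volUC

/-- The reflection `ã(t) := a(1/t)` (in additive coordinates, `t ↦ -t`). -/
def tildeF (a : UC → ℂ) : UC → ℂ := fun t => a (-t)

/-- The function `t ↦ t^n` on the circle (in additive coordinates, `fourier n`). -/
def tpow (n : ℤ) : UC → ℂ := fun t => fourier n t

/-- The first function `c := b̃·ã⁻¹` of the subordinated pair (here `atinv` denotes `ã⁻¹`). -/
def subC (b atinv : UC → ℂ) : UC → ℂ := fun t => tildeF b t * atinv t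

/-- The second function `d := b·ã⁻¹` of the subordinated pair. -/
def subD (b atinv : UC → ℂ) : UC → ℂ := fun t => b t * atinv t

/-- The basic operators on `L^p(𝕋)`: the Riesz projection `P` (characterized by its action on
Fourier coefficients), the flip `J`, `(Jf)(t) = t⁻¹ f(1/t)` (characterized on Fourier
coefficients by `n ↦ -n-1`), and the multiplication operators `M a` for `a ∈ L^∞`. -/
structure CircleOps (p : ℝ≥0∞) [Fact (1 ≤ p)] where
  P : LpC p →L[ℂ] LpC p
  J : LpC p →L[ℂ] LpC p
  M : (UC → ℂ) → LpC p →L[ℂ] LpC p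
  P_spec : ∀ (f : LpC p) (n : ℤ),
    fourierCoeff (⇑(P f)) n = if 0 ≤ n then fourierCoeff (⇑f) n else 0
  J_spec : ∀ (f : LpC p) (n : ℤ),
    fourierCoeff (⇑(J f)) n = fourierCoeff (⇑f) (-n - 1)
  M_spec : ∀ (a : UC → ℂ), MemLp a ⊤ volUC →
    ∀ f : LpC p, ⇑(M a f) =ᵐ[volUC] fun t => a t * f t

/-- The Hardy space `H^p(𝕋)`, as the subset of `L^p(𝕋)` of functions whose negatively indexed
Fourier coefficients vanish. -/
def HardyS (p : ℝ≥0∞) [Fact (1 ≤ p)] : Set (LpC p) :=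
  {f | ∀ n : ℤ, n < 0 → fourierCoeff (⇑f) n = 0}

/-- A `2×2` operator matrix acting on `E × E`. -/
def mat2 {E : Type*} [NormedAddCommGroup E] [NormedSpace ℂ E]
    (A B C D : E →L[ℂ] E) : (E × E) →L[ℂ] (E × E) :=
  ((A ∘L ContinuousLinearMap.fst ℂ E E) + (B ∘L ContinuousLinearMap.snd ℂ E E)).prod
    ((C ∘L ContinuousLinearMap.fst ℂ E E) + (D ∘L ContinuousLinearMap.snd ℂ E E))

namespace CircleOps

variable {p : ℝ≥0∞} [Fact (1 ≤ p)] (O : CircleOps p)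

/-- `Q := I - P`. -/
def Q : LpC p →L[ℂ] LpC p := ContinuousLinearMap.id ℂ (LpC p) - O.P

/-- The Toeplitz operator `T(a) := P a P`. -/
def Toep (a : UC → ℂ) : LpC p →L[ℂ] LpC p := O.P ∘L O.M a ∘L O.P

/-- The Hankel operator `H(b) := P b Q J`. -/
def Hank (b : UC → ℂ) : LpC p →L[ℂ] LpC p := O.P ∘L O.M b ∘L O.Q ∘L O.J

/-- `ℛ := diag(T(a)+H(b), T(a)-H(b))`. -/
def Rdiag (a b : UC → ℂ) : (LpC p × LpC p) →L[ℂ] (LpC p × LpC p) :=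
  mat2 (O.Toep a + O.Hank b) 0 0 (O.Toep a - O.Hank b)

/-- `𝒫 := diag(P,P)`. -/
def PP : (LpC p × LpC p) →L[ℂ] (LpC p × LpC p) := mat2 O.P 0 0 O.P

/-- `𝒬 := diag(Q,Q)`. -/
def QQ : (LpC p × LpC p) →L[ℂ] (LpC p × LpC p) := mat2 O.Q 0 0 O.Q

/-- `𝒥 := (1/2)[[I,J],[I,-J]]`. -/
def Jop : (LpC p × LpC p) →L[ℂ] (LpC p × LpC p) :=
  (2:ℂ)⁻¹ • mat2 (ContinuousLinearMap.id ℂ (LpC p)) O.J (ContinuousLinearMap.id ℂ (LpC p)) (-O.J)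

/-- `𝒥⁻¹ = [[I,I],[J,-J]]`. -/
def Jinv : (LpC p × LpC p) →L[ℂ] (LpC p × LpC p) :=
  mat2 (ContinuousLinearMap.id ℂ (LpC p)) (ContinuousLinearMap.id ℂ (LpC p)) O.J (-O.J)

/-- `T(V(a,b)) = 𝒫 V(a,b) 𝒫`, where `V(a,b) = [[a - b b̃ ã⁻¹, b ã⁻¹],[-b̃ ã⁻¹, ã⁻¹]]`
(`atinv` denotes `ã⁻¹`). -/
def TV (a b atinv : UC → ℂ) : (LpC p × LpC p) →L[ℂ] (LpC p × LpC p) :=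
  mat2 (O.Toep fun t => a t - b t * tildeF b t * atinv t)
    (O.Toep fun t => b t * atinv t)
    (O.Toep fun t => -(tildeF b t * atinv t))
    (O.Toep atinv)

/-- `𝒫 V(a,b) 𝒬`. -/
def PVQ (a b atinv : UC → ℂ) : (LpC p × LpC p) →L[ℂ] (LpC p × LpC p) :=
  mat2 (O.P ∘L O.M (fun t => a t - b t * tildeF b t * atinv t) ∘L O.Q)
    (O.P ∘L O.M (fun t => b t * atinv t) ∘L O.Q)
    (O.P ∘L O.M (fun t => -(tildeF b t * atinv t)) ∘L O.Q)
    (O.P ∘L O.M atinv ∘L O.Q)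

/-- `A₁ := I - diag(P,Q)·[[a,b],[b̃,ã]]·diag(Q,P)`. -/
def A1 (a b : UC → ℂ) : (LpC p × LpC p) →L[ℂ] (LpC p × LpC p) :=
  ContinuousLinearMap.id ℂ (LpC p × LpC p) -
    mat2 (O.P ∘L O.M a ∘L O.Q) (O.P ∘L O.M b ∘L O.P)
      (O.Q ∘L O.M (tildeF b) ∘L O.Q) (O.Q ∘L O.M (tildeF a) ∘L O.P)

/-- `A₂ := I + 𝒫 V(a,b) 𝒬`. -/
def A2 (a b atinv : UC → ℂ) : (LpC p × LpC p) →L[ℂ] (LpC p × LpC p) :=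
  ContinuousLinearMap.id ℂ (LpC p × LpC p) + O.PVQ a b atinv

/-- The operator `W φ := T_r⁻¹(c) T(ã⁻¹) φ - J Q c P T_r⁻¹(c) T(ã⁻¹) φ + J Q ã⁻¹ φ`,
where `Trc` is (the chosen right inverse) `T_r⁻¹(c)`. -/
def Wop (c atinv : UC → ℂ) (Trc : LpC p →L[ℂ] LpC p) : LpC p →L[ℂ] LpC p :=
  Trc ∘L O.Toep atinv
    - O.J ∘L O.Q ∘L O.M c ∘L O.P ∘L Trc ∘L O.Toep atinv
    + O.J ∘L O.Q ∘L O.M atinv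

/-- The particular solution
`Tc T(ã⁻¹) Td f - J Q c Tc T(ã⁻¹) Td f + J Q ã⁻¹ Td f`, where `Tc`, `Td` are
(one-sided) inverses of `T(c)`, `T(d)`. -/
def baseSol (c atinv : UC → ℂ) (Tc Td : LpC p →L[ℂ] LpC p) (f : LpC p) : LpC p :=
  Tc (O.Toep atinv (Td f)) - O.J (O.Q (O.M c (Tc (O.Toep atinv (Td f)))))
    + O.J (O.Q (O.M atinv (Td f)))

end CircleOps

/-- Wiener–Hopf factorization data for `g` in the sense of the paper:
`g = g₋ t^n g₊` with `n = -ind` (so `ind = ind T(g)`), together with the membership and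
normalization conditions.  (For simplicity all factors are taken essentially bounded.) -/
structure WHFact (g : UC → ℂ) where
  ind : ℤ
  gp : UC → ℂ
  gm : UC → ℂ
  gpInv : UC → ℂ
  gmInv : UC → ℂ
  hgp : MemLp gp ⊤ volUC
  hgm : MemLp gm ⊤ volUC
  hgpInv : MemLp gpInv ⊤ volUC
  hgmInv : MemLp gmInv ⊤ volUC
  hp_inv : ∀ᵐ t ∂volUC, gp t * gpInv t = 1
  hm_inv : ∀ᵐ t ∂volUC, gm t * gmInv t = 1
  hfact : ∀ᵐ t ∂volUC, g t = gm t * tpow (-ind) t * gp t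
  hgpH : ∀ n : ℤ, n < 0 → fourierCoeff gp n = 0
  hgpInvH : ∀ n : ℤ, n < 0 → fourierCoeff gpInv n = 0
  hgmH : ∀ n : ℤ, 0 < n → fourierCoeff gm n = 0
  hgmInvH : ∀ n : ℤ, 0 < n → fourierCoeff gmInv n = 0
  hgmInfty : fourierCoeff gm 0 = 1

/-- The right inverse `T_r⁻¹(g) := T(g₊⁻¹) T(g₋⁻¹) T(t^{-n})`, `n = -ind ≤ 0`. -/
def WHFact.Tr {g : UC → ℂ} (F : WHFact g) {p : ℝ≥0∞} [Fact (1 ≤ p)] (O : CircleOps p) :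
    LpC p →L[ℂ] LpC p :=
  O.Toep F.gpInv ∘L O.Toep F.gmInv ∘L O.Toep (tpow F.ind)

/-- The left inverse `T_l⁻¹(g) := T(t^{-n}) T(g₊⁻¹) T(g₋⁻¹)`, `n = -ind ≥ 0`. -/
def WHFact.Tl {g : UC → ℂ} (F : WHFact g) {p : ℝ≥0∞} [Fact (1 ≤ p)] (O : CircleOps p) :
    LpC p →L[ℂ] LpC p :=
  O.Toep (tpow F.ind) ∘L O.Toep F.gpInv ∘L O.Toep F.gmInv

/-- The number of kernel basis functions `u_0, …, u_{κ(i)}`: `m` if `κ = 2m`, `m+1` if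
`κ = 2m+1`. -/
def numU (κ : ℤ) : ℕ := ((κ + 1) / 2).toNat

/-- The functions `u_k^{(κ(s),±)}`: for `κ = 2m`, `u_k(t) = t^{m-k-1} ± σ t^{m+k}`; for
`κ = 2m+1`, `u_k(t) = t^{m+k} ± σ t^{m-k}`.  Here `sgn = ±1`, and `σ` is the factorization
signature. -/
def ubasis (κ : ℤ) (σ sgn : ℂ) (k : ℕ) : UC → ℂ :=
  if κ % 2 = 0 then
    fun t => fourier (κ / 2 - (k:ℤ) - 1) t + sgn * σ * fourier (κ / 2 + (k:ℤ)) t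
  else
    fun t => fourier (κ / 2 + (k:ℤ)) t + sgn * σ * fourier (κ / 2 - (k:ℤ)) t

/-- `sign(r)`: `0` if `r = 0` and `1` if `r > 0` (as a complex scalar). -/
def sgnInd (κ : ℤ) : ℂ := if κ = 0 then 0 else 1

/-!
For `φ ∈ H^p` put `ψ := T(tⁿ)φ = tⁿφ`. Then `T(t⁻ⁿa)ψ = T(a)φ`, and `H(tⁿb)ψ = H(b)φ` because
`tⁿ·QJ(tⁿφ) = QJφ`: multiplying by `tⁿ` shifts Fourier coefficients by `n`, `J` reflects them
about `-1/2`, and the coefficients that cross `0` vanish since `φ ∈ H^p`. Hence a solution `φ` of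
`(T(a)+H(b))φ = f` yields the solution `ψ ∈ T(tⁿ)H^p` of the shifted equation.

Since `P` and `J` are only known through their Fourier coefficients, all operator identities rest
on uniqueness: an integrable function on the circle with vanishing Fourier coefficients is zero,
because trigonometric polynomials are dense in `C(𝕋)` and indicators of closed sets are pointwise
limits of bounded continuous functions.
-/

open Set Filter Topology

theorem ae_eq_zero_of_forall_integral_smul_eq_zero {X E : Type*} [TopologicalSpace X]
    [HasOuterApproxClosed X] [MeasurableSpace X] [BorelSpace X]
    [NormedAddCommGroup E] [NormedSpace ℝ E] [CompleteSpace E] {μ : Measure X} {g : X → E}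
    (hg : Integrable g μ) (h : ∀ c : C(X, ℝ), ∫ x, c x • g x ∂μ = 0) : g =ᵐ[μ] 0 := by
  refine ae_eq_zero_of_forall_setIntegral_isClosed_eq_zero hg fun F hF => ?_
  let c : ℕ → C(X, ℝ) := fun n => ⟨fun x => hF.apprSeq n x, by fun_prop⟩
  have hlim : Tendsto (fun n => ∫ x, c n x • g x ∂μ) atTop (𝓝 (∫ x, F.indicator g x ∂μ)) := by
    refine tendsto_integral_of_dominated_convergence (‖g ·‖)
      (fun n => (c n).continuous.aestronglyMeasurable.smul hg.1) hg.norm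
      (fun n => ae_of_all _ fun x => ?_) (ae_of_all _ fun x => ?_)
    · rw [norm_smul]
      exact mul_le_of_le_one_left (norm_nonneg _)
        (by simpa [c] using HasOuterApproxClosed.apprSeq_apply_le_one hF n x)
    · have := ((NNReal.continuous_coe.tendsto _).comp
        (tendsto_pi_nhds.1 (HasOuterApproxClosed.tendsto_apprSeq hF) x)).smul_const (g x)
      convert this using 2
      · rfl
      · by_cases hx : x ∈ F <;> simp [hx]
  rw [← integral_indicator hF.measurableSet]
  exact tendsto_nhds_unique hlim (by simp [h])

section FourierUniqueness

open AddCircle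

variable {T : ℝ} [Fact (0 < T)]
  {E : Type*} [NormedAddCommGroup E]

theorem AddCircle.ae_haarAddCircle : ae (haarAddCircle : Measure (AddCircle T)) = ae volume := by
  rw [AddCircle.volume_eq_smul_haarAddCircle]
  exact le_antisymm (Measure.ae_le_iff_absolutelyContinuous.2
    (Measure.absolutelyContinuous_smul (ENNReal.ofReal_pos.2 Fact.out).ne'))
    (Measure.ae_le_iff_absolutelyContinuous.2 Measure.smul_absolutelyContinuous)

theorem AddCircle.integrable_haarAddCircle_iff {f : AddCircle T → E} :
    Integrable f haarAddCircle ↔ Integrable f volume := by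
  rw [AddCircle.volume_eq_smul_haarAddCircle, integrable_smul_measure
    (ENNReal.ofReal_pos.2 Fact.out).ne' ENNReal.ofReal_ne_top]

theorem Lp.integrable_haarAddCircle {p : ℝ≥0∞} [Fact (1 ≤ p)]
    (f : Lp E p (volume : Measure (AddCircle T))) : Integrable f haarAddCircle :=
  AddCircle.integrable_haarAddCircle_iff.2 ((Lp.memLp f).integrable Fact.out)

variable [NormedSpace ℂ E]

theorem fourierCoeff.sub {f g : AddCircle T → E} (hf : Integrable f haarAddCircle)
    (hg : Integrable g haarAddCircle) :
    fourierCoeff (f - g) = fourierCoeff f - fourierCoeff g := by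
  ext n
  simp only [fourierCoeff, Pi.sub_apply, smul_sub]
  exact integral_sub (hf.fourier_smul _) (hg.fourier_smul _)

theorem fourierCoeff_fourier_mul (f : AddCircle T → ℂ) (m k : ℤ) :
    fourierCoeff (fun t => fourier m t * f t) k = fourierCoeff f (k - m) := by
  simp only [fourierCoeff, smul_eq_mul, ← mul_assoc, ← fourier_add]
  ring_nf

theorem integral_smul_eq_zero_of_fourierCoeff_eq_zero {g : AddCircle T → E}
    (hg : Integrable g haarAddCircle) (h : ∀ n, fourierCoeff g n = 0) (c : C(AddCircle T, ℂ)) :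
    ∫ x, c x • g x ∂haarAddCircle = 0 := by
  have hint : ∀ c : C(AddCircle T, ℂ), Integrable (fun x => c x • g x) haarAddCircle :=
    fun c => hg.bdd_smul ‖c‖ c.continuous.aestronglyMeasurable (ae_of_all _ c.norm_coe_le_norm)
  let L : C(AddCircle T, ℂ) →L[ℂ] E := LinearMap.mkContinuous
    { toFun := fun c => ∫ x, c x • g x ∂haarAddCircle
      map_add' := fun c d => by
        simp only [ContinuousMap.add_apply, add_smul]
        exact integral_add (hint c) (hint d)
      map_smul' := fun s c => by
        simp only [ContinuousMap.smul_apply, smul_assoc, integral_smul]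
        rfl }
    (∫ x, ‖g x‖ ∂haarAddCircle) fun c => by
      calc ‖∫ x, c x • g x ∂haarAddCircle‖ ≤ ∫ x, ‖c‖ * ‖g x‖ ∂haarAddCircle :=
            norm_integral_le_of_norm_le (hg.norm.const_mul _) (ae_of_all _ fun x => by
              rw [norm_smul]; gcongr; exact c.norm_coe_le_norm x)
        _ = _ := by rw [integral_const_mul, mul_comm]
  have hker : Submodule.span ℂ (range fourier) ≤
      LinearMap.ker (L : C(AddCircle T, ℂ) →ₗ[ℂ] E) := by
    rw [Submodule.span_le]
    rintro _ ⟨n, rfl⟩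
    simpa [L, fourierCoeff] using h (-n)
  have hL := Submodule.topologicalClosure_minimal _ hker L.isClosed_ker
  rw [span_fourier_closure_eq_top] at hL
  exact hL Submodule.mem_top

theorem ae_eq_zero_of_fourierCoeff_eq_zero [CompleteSpace E] {g : AddCircle T → E}
    (hg : Integrable g haarAddCircle) (h : ∀ n, fourierCoeff g n = 0) :
    g =ᵐ[haarAddCircle] 0 := by
  refine ae_eq_zero_of_forall_integral_smul_eq_zero hg fun c => ?_
  have := integral_smul_eq_zero_of_fourierCoeff_eq_zero hg h ⟨fun x => (c x : ℂ), by fun_prop⟩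
  simpa only [ContinuousMap.coe_mk, Complex.coe_smul] using this

theorem Lp.fourierCoeff_sub {p : ℝ≥0∞} [Fact (1 ≤ p)]
    (f g : Lp E p (volume : Measure (AddCircle T))) :
    fourierCoeff ⇑(f - g) = fourierCoeff f - fourierCoeff g := by
  have hsub : ⇑(f - g) =ᵐ[haarAddCircle] ⇑f - ⇑g := by
    rw [EventuallyEq, AddCircle.ae_haarAddCircle]
    exact Lp.coeFn_sub f g
  rw [fourierCoeff_congr_ae hsub,
    fourierCoeff.sub (Lp.integrable_haarAddCircle f) (Lp.integrable_haarAddCircle g)]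

theorem Lp.ext_fourierCoeff [CompleteSpace E] {p : ℝ≥0∞} [Fact (1 ≤ p)]
    {f g : Lp E p (volume : Measure (AddCircle T))} (h : fourierCoeff f = fourierCoeff g) :
    f = g := by
  rw [← sub_eq_zero, Lp.eq_zero_iff_ae_eq_zero, ← AddCircle.ae_haarAddCircle]
  refine ae_eq_zero_of_fourierCoeff_eq_zero (Lp.integrable_haarAddCircle _) fun n => ?_
  rw [Lp.fourierCoeff_sub, h, sub_self, Pi.zero_apply]

end FourierUniqueness

theorem memLp_top_tpow (m : ℤ) : MemLp (tpow m) ⊤ volUC :=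
  (map_continuous (fourier m)).memLp_top_of_hasCompactSupport
    (HasCompactSupport.of_compactSpace _) _

theorem tpow_neg_mul_tpow (m : ℤ) (t : UC) : tpow (-m) t * tpow m t = 1 := by
  simp only [tpow, ← fourier_add, neg_add_cancel, fourier_zero]

namespace CircleOps

variable {p : ℝ≥0∞} [Fact (1 ≤ p)] (O : CircleOps p)

theorem P_eq_self_of_mem_hardyS {φ : LpC p} (hφ : φ ∈ HardyS p) : O.P φ = φ := by
  refine Lp.ext_fourierCoeff (funext fun k => ?_)
  rw [O.P_spec]
  split_ifs with hk
  · rfl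
  · exact (hφ k (not_le.1 hk)).symm

theorem fourierCoeff_Q (g : LpC p) (k : ℤ) :
    fourierCoeff (O.Q g) k = if 0 ≤ k then 0 else fourierCoeff g k := by
  rw [Q, sub_apply, Lp.fourierCoeff_sub, Pi.sub_apply, O.P_spec]
  split_ifs <;> simp

theorem fourierCoeff_M_tpow (m : ℤ) (g : LpC p) (k : ℤ) :
    fourierCoeff (O.M (tpow m) g) k = fourierCoeff g (k - m) := by
  have hM : ⇑(O.M (tpow m) g) =ᵐ[AddCircle.haarAddCircle] fun t => fourier m t * g t := by
    rw [EventuallyEq, AddCircle.ae_haarAddCircle]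
    exact O.M_spec _ (memLp_top_tpow m) g
  rw [fourierCoeff_congr_ae hM, fourierCoeff_fourier_mul]

theorem M_comp_M_apply {a b : UC → ℂ} (ha : MemLp a ⊤ volUC) (hb : MemLp b ⊤ volUC)
    (g : LpC p) :
    O.M a (O.M b g) = O.M (fun t => a t * b t) g := by
  refine Lp.ext ?_
  filter_upwards [O.M_spec a ha (O.M b g), O.M_spec b hb g,
    O.M_spec _ (hb.mul' ha) g] with t hab hb hab'
  rw [hab, hb, hab', mul_assoc]

theorem M_tpow_mem_hardyS (n : ℕ) {φ : LpC p} (hφ : φ ∈ HardyS p) :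
    O.M (tpow n) φ ∈ HardyS p := fun k hk => by
  rw [fourierCoeff_M_tpow]
  exact hφ _ (by omega)

theorem Toep_tpow_apply_of_mem_hardyS (n : ℕ) {φ : LpC p} (hφ : φ ∈ HardyS p) :
    O.Toep (tpow n) φ = O.M (tpow n) φ := by
  change O.P (O.M _ (O.P φ)) = _
  rw [O.P_eq_self_of_mem_hardyS hφ, O.P_eq_self_of_mem_hardyS (O.M_tpow_mem_hardyS n hφ)]

theorem M_tpow_Q_J_M_tpow (n : ℕ) {φ : LpC p} (hφ : φ ∈ HardyS p) :
    O.M (tpow n) (O.Q (O.J (O.M (tpow n) φ))) = O.Q (O.J φ) := by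
  refine Lp.ext_fourierCoeff (funext fun k => ?_)
  rw [fourierCoeff_M_tpow, fourierCoeff_Q, fourierCoeff_Q, O.J_spec, O.J_spec,
    fourierCoeff_M_tpow]
  by_cases hk : 0 ≤ k
  · rw [if_pos hk]
    split_ifs
    · rfl
    · exact hφ _ (by omega)
  · rw [if_neg hk, if_neg (by omega)]
    ring_nf

theorem Toep_tpow_neg_mul_comp_Toep_tpow (n : ℕ) {a : UC → ℂ} (ha : MemLp a ⊤ volUC)
    {φ : LpC p} (hφ : φ ∈ HardyS p) :
    O.Toep (fun t => tpow (-n) t * a t) (O.Toep (tpow n) φ) = O.Toep a φ := by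
  change O.P (O.M _ (O.P _)) = O.P (O.M a (O.P φ))
  rw [O.P_eq_self_of_mem_hardyS hφ, O.Toep_tpow_apply_of_mem_hardyS n hφ,
    O.P_eq_self_of_mem_hardyS (O.M_tpow_mem_hardyS n hφ),
    O.M_comp_M_apply (ha.mul' (memLp_top_tpow _)) (memLp_top_tpow _)]
  congr 3
  funext t
  rw [mul_right_comm, tpow_neg_mul_tpow, one_mul]

theorem Hank_tpow_mul_comp_Toep_tpow (n : ℕ) {b : UC → ℂ} (hb : MemLp b ⊤ volUC)
    {φ : LpC p} (hφ : φ ∈ HardyS p) :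
    O.Hank (fun t => tpow n t * b t) (O.Toep (tpow n) φ) = O.Hank b φ := by
  change O.P (O.M _ (O.Q (O.J _))) = O.P (O.M b (O.Q (O.J φ)))
  rw [O.Toep_tpow_apply_of_mem_hardyS n hφ, ← O.M_tpow_Q_J_M_tpow n hφ,
    O.M_comp_M_apply hb (memLp_top_tpow _)]
  simp only [mul_comm]

end CircleOps

theorem stmt7_general (p : ℝ≥0∞) [Fact (1 ≤ p)]
    (a b : UC → ℂ) (ha : MemLp a ⊤ volUC) (hb : MemLp b ⊤ volUC)
    (O : CircleOps p) (n : ℕ)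
    (f : LpC p)
    (hno : ∀ ψ ∈ O.Toep (tpow (n : ℤ)) '' HardyS p,
      (O.Toep (fun t => tpow (-(n : ℤ)) t * a t) + O.Hank (fun t => tpow (n : ℤ) t * b t)) ψ
        ≠ f) :
    ∀ φ ∈ HardyS p, (O.Toep a + O.Hank b) φ ≠ f := by
  intro φ hφ hφf
  refine hno _ ⟨φ, hφ, rfl⟩ ?_
  rw [add_apply, O.Toep_tpow_neg_mul_comp_Toep_tpow n ha hφ,
    O.Hank_tpow_mul_comp_Toep_tpow n hb hφ, ← add_apply, hφf]

/-- Corollary 3.7: if `(T(t^{-n}a) + H(t^n b))ψ = f` has no solution in the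
image of `T(t^n) : H^p → H^p`, then `(T(a)+H(b))φ = f` is not solvable. -/
theorem stmt7 (p : ℝ≥0∞) [Fact (1 ≤ p)] (hp : 1 < p) (hp' : p ≠ ⊤)
    (a b : UC → ℂ) (ha : MemLp a ⊤ volUC) (hb : MemLp b ⊤ volUC)
    (O : CircleOps p) (n : ℕ)
    (f : LpC p) (hf : f ∈ HardyS p)
    (hno : ∀ ψ ∈ O.Toep (tpow (n : ℤ)) '' HardyS p,
      (O.Toep (fun t => tpow (-(n : ℤ)) t * a t) + O.Hank (fun t => tpow (n : ℤ) t * b t)) ψ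
        ≠ f) :
    ∀ φ ∈ HardyS p, (O.Toep a + O.Hank b) φ ≠ f :=
  stmt7_general p a b ha hb O n f hno

end
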